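/- Assume the inductive setting, and let M be the subgroup of Sym(Z) generated by all the Hᵢ (i ∈ ℤ). Then every nontrivial normal subgroup N of M contains a subgroup S together with a surjective group homomorphism from S onto L₀; likewise, for each i ∈ ℤ, every nontrivial normal subgroup of Lᵢ contains a subgroup admitting a surjective homomorphism onto L₀. -/

import Mathlib

/-- A pre-wreath structure `(Z, Y, H, X)`: `H` is a nontrivial subgroup of `Sym(Z)`,
`X ⊆ Y ⊆ Z`, `X` nonempty, every element of `H` fixes every point outside `Y`,
if `Xh` meets `X` then `h` is the identity on `X`, and every nontrivial `h ∈ H`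
moves some set `Xj` (`j ∈ H`). (Images are written with Lean's left action, so the
set `Xh` of the paper is `⇑h '' X`.) -/
def IsPreWreath {Z : Type*} (Y : Set Z) (H : Subgroup (Equiv.Perm Z)) (X : Set Z) : Prop :=
  H ≠ ⊥ ∧
  (∀ h ∈ H, ∀ z : Z, z ∉ Y → h z = z) ∧
  X ⊆ Y ∧
  X.Nonempty ∧
  (∀ h ∈ H, (⇑h '' X ∩ X).Nonempty → ∀ x ∈ X, h x = x) ∧
  (∀ h ∈ H, h ≠ 1 → ∃ j ∈ H, ⇑h '' (⇑j '' X) ≠ ⇑j '' X)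

/-- The carrier `XH = {Xh : h ∈ H}` of a pre-wreath structure. -/
def wreathCarrier {Z : Type*} (H : Subgroup (Equiv.Perm Z)) (X : Set Z) : Set (Set Z) :=
  {A : Set Z | ∃ h ∈ H, A = ⇑h '' X}

/-- The support of a subgroup of `Sym(Z)`: the points moved by some element. -/
def Supp {Z : Type*} (K : Subgroup (Equiv.Perm Z)) : Set Z :=
  {z : Z | ∃ g ∈ K, g z ≠ z}

/-- The inductive setting: `(Z, fY₀, H₁, Y₀)` is a pre-wreath structure (`Y₁ = Y₀f` is
the image of `Y₀` under the bijection `f`), `Y₀ ⊆ Supp(H₁) ⊆ Y₁` with `Supp(H₁) ≠ Y₁`,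
and `W₀` is a nonempty subset of `Y₀` whose image under `f` misses `Supp(H₁)`. -/
def InductiveSetting {Z : Type*} (H₁ : Subgroup (Equiv.Perm Z)) (f : Equiv.Perm Z)
    (Y₀ W₀ : Set Z) : Prop :=
  IsPreWreath (⇑f '' Y₀) H₁ Y₀ ∧
  Y₀ ⊆ Supp H₁ ∧ Supp H₁ ⊆ ⇑f '' Y₀ ∧ Supp H₁ ≠ ⇑f '' Y₀ ∧
  W₀.Nonempty ∧ W₀ ⊆ Y₀ ∧ (⇑f '' W₀) ∩ Supp H₁ = ∅

/-- `Hᵢ`, the conjugate of `H₁` carried over by `f^(i-1)`: this is the paper's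
`f^{-(i-1)} H₁ f^{i-1}` written in right-action notation, i.e. the subgroup
`{f^(i-1) h f^(-(i-1)) : h ∈ H₁}` of permutations acting on the left. -/
def Hseq {Z : Type*} (H₁ : Subgroup (Equiv.Perm Z)) (f : Equiv.Perm Z) (i : ℤ) :
    Subgroup (Equiv.Perm Z) :=
  Subgroup.map (MulAut.conj (f ^ (i - 1))).toMonoidHom H₁

/-- `R_j`, the subgroup generated by the `Hᵢ` with `i ≥ j`. -/
def Rseq {Z : Type*} (H₁ : Subgroup (Equiv.Perm Z)) (f : Equiv.Perm Z) (j : ℤ) :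
    Subgroup (Equiv.Perm Z) :=
  Subgroup.closure (⋃ i ∈ {i : ℤ | j ≤ i}, (Hseq H₁ f i : Set (Equiv.Perm Z)))

/-- `Lᵢ`, the subgroup generated by the `H_j` with `j < i`. -/
def Lseq {Z : Type*} (H₁ : Subgroup (Equiv.Perm Z)) (f : Equiv.Perm Z) (i : ℤ) :
    Subgroup (Equiv.Perm Z) :=
  Subgroup.closure (⋃ j ∈ {j : ℤ | j < i}, (Hseq H₁ f j : Set (Equiv.Perm Z)))

/-- `M`, the subgroup generated by all the `Hᵢ`, `i ∈ ℤ`. -/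
def Mgrp {Z : Type*} (H₁ : Subgroup (Equiv.Perm Z)) (f : Equiv.Perm Z) :
    Subgroup (Equiv.Perm Z) :=
  Subgroup.closure (⋃ i : ℤ, (Hseq H₁ f i : Set (Equiv.Perm Z)))

/-- `Wᵢ = W₀fⁱ`, the image of `W₀` under the `i`-th power of `f`. -/
def Wseq {Z : Type*} (W₀ : Set Z) (f : Equiv.Perm Z) (i : ℤ) : Set Z :=
  ⇑(f ^ i) '' W₀

/-!
Every `v ∈ L_{r+1}` lies in the wreath product `L_r ≀ H_r`: it permutes the blocks `aY_{r-1}`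
(`a ∈ H_r`) as some `h ∈ H_r` does and acts inside each block through an element of `L_r`.
Take `1 ≠ g` in the normal subgroup `N`; it involves only finitely many `H_j`, say `j < r + 1`.
If the top component `h` is nontrivial it moves some block `B = aY_{r-1}`, hence moves `B` off
itself. The copy `(a fʳ) L₀ (a fʳ)⁻¹ ≤ L_{r+1}` of `L₀` is supported on `B`, and the commutators
of its elements with `g` lie in `N` and act on `B` as those elements, so restricting them to `B`
maps a subgroup of `N` onto `L₀`. If `h = 1`, then `g` moves a point of some block `aY_{r-1}`, and
`a⁻¹ g a ∈ N` agrees on `Y_{r-1}` with a nontrivial element of `L_r`: descend one level.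
-/

open Equiv Set MulAction Pointwise

namespace Equiv.Perm

variable {α : Type*}

lemma mem_stabilizer_of_mem_fixingSubgroup_compl {σ : Perm α} {s : Set α}
    (hσ : σ ∈ fixingSubgroup (Perm α) sᶜ) : σ ∈ stabilizer (Perm α) s :=
  stabilizer_compl (Perm α) α ▸ fixingSubgroup_le_stabilizer _ _ hσ

lemma image_eq_of_mem_fixingSubgroup_compl {σ : Perm α} {s : Set α}
    (hσ : σ ∈ fixingSubgroup (Perm α) sᶜ) : σ '' s = s :=
  mem_stabilizer_iff.mp (mem_stabilizer_of_mem_fixingSubgroup_compl hσ)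

lemma apply_mem_of_mem_fixingSubgroup_compl {σ : Perm α} {s : Set α}
    (hσ : σ ∈ fixingSubgroup (Perm α) sᶜ) {x : α} (hx : x ∈ s) : σ x ∈ s :=
  image_eq_of_mem_fixingSubgroup_compl hσ ▸ mem_image_of_mem σ hx

lemma apply_eq_of_mem_fixingSubgroup_compl {σ : Perm α} {s : Set α}
    (hσ : σ ∈ fixingSubgroup (Perm α) sᶜ) {x : α} (hx : x ∉ s) : σ x = x :=
  (mem_fixingSubgroup_iff _).mp hσ x hx

lemma conj_image_image (σ h : Perm α) (s : Set α) :
    (σ * h * σ⁻¹) '' (σ '' s) = σ '' (h '' s) := by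
  simp only [coe_mul, image_comp]
  rw [image_image (⇑σ⁻¹) σ s]
  simp

lemma apply_mem_biUnion_image_iff {H : Subgroup (Perm α)} {X : Set α} {h : Perm α}
    (hh : h ∈ H) {z : α} : h z ∈ ⋃ a ∈ H, a '' X ↔ z ∈ ⋃ a ∈ H, a '' X := by
  simp only [mem_iUnion, mem_image, exists_prop]
  constructor
  · rintro ⟨a, ha, x, hx, hax⟩
    exact ⟨h⁻¹ * a, mul_mem (inv_mem hh) ha, x, hx, by simp [hax]⟩
  · rintro ⟨a, ha, x, hx, rfl⟩
    exact ⟨h * a, mul_mem hh ha, x, hx, rfl⟩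

open scoped Classical in
noncomputable def restrictStabilizer (s : Set α) : stabilizer (Perm α) s →* Perm α :=
  ofSubtype.comp (toPermHom (stabilizer (Perm α) s) s)

lemma restrictStabilizer_apply_of_mem {s : Set α} (σ : stabilizer (Perm α) s) {x : α}
    (hx : x ∈ s) : restrictStabilizer s σ x = (σ : Perm α) x := by
  classical
  exact ofSubtype_apply_of_mem _ hx

lemma restrictStabilizer_apply_of_notMem {s : Set α} (σ : stabilizer (Perm α) s) {x : α}
    (hx : x ∉ s) : restrictStabilizer s σ x = x := by
  classical
  exact ofSubtype_apply_of_not_mem _ hx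

end Equiv.Perm

lemma Subgroup.exists_le_surjective_of_le_range {G H : Type*} [Group G] [Group H]
    {K N : Subgroup G} (hKN : K ≤ N) (ψ : K →* H) {C : Subgroup H} (hC : C ≤ ψ.range) :
    ∃ S : Subgroup G, S ≤ N ∧ ∃ φ : S →* C, Function.Surjective φ := by
  let T := C.comap ψ
  let e := T.equivMapOfInjective K.subtype K.subtype_injective
  refine ⟨T.map K.subtype, (map_subtype_le T).trans hKN,
    (ψ.subgroupComap C).comp e.symm.toMonoidHom, ?_⟩
  rintro ⟨c, hc⟩
  obtain ⟨k, rfl⟩ := hC hc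
  exact ⟨e ⟨k, hc⟩, by simp; rfl⟩

/-- The commutators `[c, g]` (`c ∈ C`) lie in `N` and act on `B` as `c`, so restriction to `B`
maps a subgroup of `N` onto `C`. -/
theorem Equiv.Perm.exists_le_surjective_of_disjoint_image {α : Type*} {N C : Subgroup (Perm α)}
    {B : Set α} {g : Perm α} (hg : g ∈ N) (hC : C ≤ fixingSubgroup (Perm α) Bᶜ)
    (hCN : ∀ c ∈ C, ∀ n ∈ N, c * n * c⁻¹ ∈ N) (hB : _root_.Disjoint (g '' B) B) :
    ∃ S : Subgroup (Perm α), S ≤ N ∧ ∃ φ : S →* C, Function.Surjective φ := by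
  let K := N ⊓ stabilizer (Perm α) B
  refine Subgroup.exists_le_surjective_of_le_range (K := K) inf_le_left
    ((restrictStabilizer B).comp (Subgroup.inclusion inf_le_right)) fun c hc => ?_
  have hcB := hC hc
  have hcomm : EqOn (c * g * c⁻¹ * g⁻¹) c B := fun x hx => by
    have hgx : g⁻¹ x ∉ B := fun h => hB.ne_of_mem ⟨_, h, g.apply_symm_apply x⟩ hx rfl
    change c (g (c⁻¹ (g⁻¹ x))) = c x
    rw [apply_eq_of_mem_fixingSubgroup_compl (inv_mem hcB) hgx]
    exact congrArg c (g.apply_symm_apply x)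
  have hmem : c * g * c⁻¹ * g⁻¹ ∈ K := Subgroup.mem_inf.mpr
    ⟨mul_mem (hCN c hc g hg) (inv_mem hg), mem_stabilizer_iff.mpr <|
      (image_congr hcomm).trans (image_eq_of_mem_fixingSubgroup_compl hcB)⟩
  refine ⟨⟨_, hmem⟩, Perm.ext fun x => ?_⟩
  by_cases hx : x ∈ B
  · exact (restrictStabilizer_apply_of_mem _ hx).trans (hcomm hx)
  · exact (restrictStabilizer_apply_of_notMem _ hx).trans
      (apply_eq_of_mem_fixingSubgroup_compl hcB hx).symm

namespace IsPreWreath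

variable {Z : Type*} {Y X : Set Z} {H : Subgroup (Perm Z)}

lemma le_fixingSubgroup (hp : IsPreWreath Y H X) : H ≤ fixingSubgroup (Perm Z) Yᶜ :=
  fun h hh => (mem_fixingSubgroup_iff _).mpr fun z hz => hp.2.1 h hh z hz

lemma disjoint_image_of_ne (hp : IsPreWreath Y H X) {a b : Perm Z} (ha : a ∈ H) (hb : b ∈ H)
    (hne : a '' X ≠ b '' X) : Disjoint (a '' X) (b '' X) := by
  obtain ⟨-, -, -, -, hfix, -⟩ := hp
  refine Set.disjoint_left.mpr ?_
  rintro _ ⟨x, hx, rfl⟩ ⟨y, hy, hxy⟩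
  have hba := hfix (b⁻¹ * a) (mul_mem (inv_mem hb) ha)
    ⟨b⁻¹ (a x), mem_image_of_mem _ hx, by rw [← hxy]; simpa using hy⟩
  refine hne (image_congr fun z hz => ?_)
  simpa using congrArg b (hba z hz)

lemma map_conj (hp : IsPreWreath Y H X) (σ : Perm Z) :
    IsPreWreath (σ '' Y) (H.map (MulAut.conj σ).toMonoidHom) (σ '' X) := by
  obtain ⟨hH, hsupp, hXY, hX, hfix, hmove⟩ := hp
  refine ⟨?_, ?_, image_mono hXY, hX.image σ, ?_, ?_⟩
  · exact (Subgroup.map_eq_bot_iff_of_injective H (MulAut.conj σ).injective).not.mpr hH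
  · rintro _ ⟨h, hh, rfl⟩ z hz
    have : σ⁻¹ z ∉ Y := fun hz' => hz ⟨_, hz', σ.apply_symm_apply z⟩
    change σ (h (σ⁻¹ z)) = z
    rw [hsupp h hh _ this]
    exact σ.apply_symm_apply z
  · rintro _ ⟨h, hh, rfl⟩ hne _ ⟨x, hx, rfl⟩
    rw [MulEquiv.coe_toMonoidHom, MulAut.conj_apply, Perm.conj_image_image,
      ← image_inter σ.injective] at hne
    simp [MulAut.conj_apply, hfix h hh hne.of_image x hx]
  · rintro _ ⟨h, hh, rfl⟩ hne
    obtain ⟨j, hj, hjX⟩ := hmove h hh (by rintro rfl; simp at hne)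
    refine ⟨σ * j * σ⁻¹, ⟨j, hj, rfl⟩, ?_⟩
    rw [MulEquiv.coe_toMonoidHom, MulAut.conj_apply, Perm.conj_image_image,
      Perm.conj_image_image]
    exact fun heq => hjX (image_injective.mpr σ.injective heq)

end IsPreWreath

section Levels

variable {Z : Type*}

def Yseq (Y₀ : Set Z) (f : Perm Z) (i : ℤ) : Set Z := (f ^ i) '' Y₀

def Lico (H₁ : Subgroup (Perm Z)) (f : Perm Z) (b r : ℤ) : Subgroup (Perm Z) :=
  Subgroup.closure (⋃ j ∈ Ico b r, (Hseq H₁ f j : Set (Perm Z)))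

variable {H₁ : Subgroup (Perm Z)} {f : Perm Z} {Y₀ : Set Z}

lemma zpow_image_Yseq (t i : ℤ) : (f ^ t) '' Yseq Y₀ f i = Yseq Y₀ f (t + i) := by
  rw [Yseq, Yseq, zpow_add, Perm.coe_mul, image_comp]

lemma map_conj_zpow_Hseq (t i : ℤ) :
    (Hseq H₁ f i).map (MulAut.conj (f ^ t)).toMonoidHom = Hseq H₁ f (t + i) := by
  rw [Hseq, Hseq, Subgroup.map_map]
  congr 1
  refine MonoidHom.ext fun x => ?_
  simp only [MonoidHom.comp_apply, MulEquiv.coe_toMonoidHom, MulAut.conj_apply,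
    add_sub_assoc, zpow_add]
  group

lemma Hseq_le_Lico {b r j : ℤ} (hj : j ∈ Ico b r) : Hseq H₁ f j ≤ Lico H₁ f b r :=
  fun _ hx => Subgroup.subset_closure (mem_biUnion hj hx)

lemma Hseq_le_Lseq {i j : ℤ} (hj : j < i) : Hseq H₁ f j ≤ Lseq H₁ f i :=
  fun _ hx => Subgroup.subset_closure (mem_biUnion (show j ∈ {j | j < i} from hj) hx)

lemma Hseq_le_Mgrp (j : ℤ) : Hseq H₁ f j ≤ Mgrp H₁ f :=
  fun _ hx => Subgroup.subset_closure (mem_iUnion_of_mem j hx)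

lemma Lico_antitone_left (r : ℤ) : Antitone fun b => Lico H₁ f b r := fun _ _ hb =>
  Subgroup.closure_mono <| biUnion_subset_biUnion_left <| Ico_subset_Ico_left hb

lemma Lseq_mono : Monotone (Lseq H₁ f) := fun _ _ hij =>
  Subgroup.closure_le _ |>.mpr <| iUnion₂_subset fun _ hj => Hseq_le_Lseq (lt_of_lt_of_le hj hij)

lemma Lseq_le_Mgrp (i : ℤ) : Lseq H₁ f i ≤ Mgrp H₁ f :=
  Subgroup.closure_le _ |>.mpr <| iUnion₂_subset fun j _ => Hseq_le_Mgrp j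

lemma Lico_self (b : ℤ) : Lico H₁ f b b = ⊥ := by
  simp [Lico]

lemma map_conj_zpow_Lseq_zero_le (t : ℤ) :
    (Lseq H₁ f 0).map (MulAut.conj (f ^ t)).toMonoidHom ≤ Lseq H₁ f t := by
  rw [Subgroup.map_le_iff_le_comap, Lseq, Subgroup.closure_le]
  refine iUnion₂_subset fun j (hj : j < 0) x hx => ?_
  have : _ ∈ Hseq H₁ f (t + j) := map_conj_zpow_Hseq t j ▸ Subgroup.mem_map_of_mem _ hx
  exact Hseq_le_Lseq (by omega) this

lemma exists_mem_Lico_of_mem_Lseq {r : ℤ} {g : Perm Z} (hg : g ∈ Lseq H₁ f r) :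
    ∃ b ≤ r, g ∈ Lico H₁ f b r := by
  suffices ∃ b, g ∈ Lico H₁ f b r from
    let ⟨b, hb⟩ := this; ⟨min b r, min_le_right b r, Lico_antitone_left r (min_le_left b r) hb⟩
  refine (Subgroup.mem_iSup_of_directed (Lico_antitone_left r).directed_le).mp ?_
  refine (Subgroup.closure_le _ |>.mpr ?_) hg
  exact iUnion₂_subset fun j hj =>
    (Hseq_le_Lico ⟨le_rfl, hj⟩).trans (le_iSup (fun b => Lico H₁ f b r) j)

lemma exists_mem_Lseq_of_mem_Mgrp {g : Perm Z} (hg : g ∈ Mgrp H₁ f) : ∃ r, g ∈ Lseq H₁ f r := by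
  refine (Subgroup.mem_iSup_of_directed Lseq_mono.directed_le).mp ?_
  refine (Subgroup.closure_le _ |>.mpr ?_) hg
  exact iUnion_subset fun j => (Hseq_le_Lseq (lt_add_one j)).trans (le_iSup (Lseq H₁ f) (j + 1))

end Levels

section Setting

variable {Z : Type*} {H₁ : Subgroup (Perm Z)} {f : Perm Z} {Y₀ : Set Z}

lemma isPreWreath_Hseq (hpw : IsPreWreath (f '' Y₀) H₁ Y₀) (j : ℤ) :
    IsPreWreath (Yseq Y₀ f j) (Hseq H₁ f j) (Yseq Y₀ f (j - 1)) := by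
  have h := hpw.map_conj (f ^ (j - 1))
  rwa [show f '' Y₀ = Yseq Y₀ f 1 by rw [Yseq, zpow_one], zpow_image_Yseq, sub_add_cancel] at h

lemma Yseq_mono (hY : Y₀ ⊆ f '' Y₀) : Monotone (Yseq Y₀ f) :=
  monotone_int_of_le_succ fun i => by
    rw [← zpow_image_Yseq i 1]
    exact image_mono (by simpa [Yseq] using hY)

lemma Hseq_le_fixingSubgroup (hpw : IsPreWreath (f '' Y₀) H₁ Y₀) (j : ℤ) :
    Hseq H₁ f j ≤ fixingSubgroup (Perm Z) (Yseq Y₀ f j)ᶜ :=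
  (isPreWreath_Hseq hpw j).le_fixingSubgroup

lemma closure_Hseq_le_fixingSubgroup (hpw : IsPreWreath (f '' Y₀) H₁ Y₀) (hY : Y₀ ⊆ f '' Y₀)
    {s : Set ℤ} {r : ℤ} (hs : ∀ j ∈ s, j ≤ r) :
    Subgroup.closure (⋃ j ∈ s, (Hseq H₁ f j : Set (Perm Z))) ≤
      fixingSubgroup (Perm Z) (Yseq Y₀ f r)ᶜ :=
  Subgroup.closure_le _ |>.mpr <| iUnion₂_subset fun j hj =>
    (Hseq_le_fixingSubgroup hpw j).trans <|
      fixingSubgroup_antitone _ _ <| compl_subset_compl.mpr <| Yseq_mono hY (hs j hj)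

lemma Lico_le_fixingSubgroup (hpw : IsPreWreath (f '' Y₀) H₁ Y₀) (hY : Y₀ ⊆ f '' Y₀)
    (b r : ℤ) : Lico H₁ f b r ≤ fixingSubgroup (Perm Z) (Yseq Y₀ f (r - 1))ᶜ :=
  closure_Hseq_le_fixingSubgroup hpw hY fun _ hj => Int.le_sub_one_of_lt hj.2

lemma Lseq_le_fixingSubgroup (hpw : IsPreWreath (f '' Y₀) H₁ Y₀) (hY : Y₀ ⊆ f '' Y₀)
    (r : ℤ) : Lseq H₁ f r ≤ fixingSubgroup (Perm Z) (Yseq Y₀ f (r - 1))ᶜ :=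
  closure_Hseq_le_fixingSubgroup hpw hY fun _ hj => Int.le_sub_one_of_lt hj

variable (H₁ f Y₀) in
/-- `v` acts as `h ∈ Hᵣ` off the blocks `aYᵣ₋₁` (`a ∈ Hᵣ`) and maps each block `aYᵣ₋₁` onto
`haYᵣ₋₁` through an element of `Lico b r`: the embedding of `L_{r+1}` into `L_r ≀ H_r`. -/
def IsWreathDecomp (b r : ℤ) (v h : Perm Z) : Prop :=
  (∀ z ∉ ⋃ a ∈ Hseq H₁ f r, a '' Yseq Y₀ f (r - 1), v z = h z) ∧
    ∀ a ∈ Hseq H₁ f r, ∃ w ∈ Lico H₁ f b r, ∀ x ∈ Yseq Y₀ f (r - 1), v (a x) = h (a (w x))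

lemma isWreathDecomp_self (b r : ℤ) (h : Perm Z) : IsWreathDecomp H₁ f Y₀ b r h h :=
  ⟨fun _ _ => rfl, fun _ _ => ⟨1, one_mem _, fun _ _ => rfl⟩⟩

lemma isWreathDecomp_one_of_mem_Hseq (hpw : IsPreWreath (f '' Y₀) H₁ Y₀) (hY : Y₀ ⊆ f '' Y₀)
    {b r j : ℤ} (hj : j ∈ Ico b r) {u : Perm Z} (hu : u ∈ Hseq H₁ f j) :
    IsWreathDecomp H₁ f Y₀ b r u 1 := by
  set X := Yseq Y₀ f (r - 1)
  have hYX : Yseq Y₀ f j ⊆ X := Yseq_mono hY (Int.le_sub_one_of_lt hj.2)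
  have hufix : ∀ z ∉ X, u z = z := fun z hz =>
    Perm.apply_eq_of_mem_fixingSubgroup_compl (Hseq_le_fixingSubgroup hpw j hu) fun h => hz (hYX h)
  refine ⟨fun z hz => hufix z fun hzX => hz (mem_biUnion (one_mem _) (by simpa using hzX)), ?_⟩
  intro a ha
  obtain ⟨-, -, -, -, hfix, -⟩ := isPreWreath_Hseq hpw r
  by_cases hmeet : (a '' X ∩ X).Nonempty
  · have hafix := hfix a ha hmeet
    refine ⟨u, Hseq_le_Lico hj hu, fun x hx => ?_⟩
    rw [hafix x hx, Perm.one_apply, hafix _ (Perm.apply_mem_of_mem_fixingSubgroup_compl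
      (Lico_le_fixingSubgroup hpw hY b r (Hseq_le_Lico hj hu)) hx)]
  · refine ⟨1, one_mem _, fun x hx => ?_⟩
    rw [hufix _ fun hax => hmeet ⟨_, mem_image_of_mem a hx, hax⟩]
    rfl

lemma IsWreathDecomp.mul (hpw : IsPreWreath (f '' Y₀) H₁ Y₀) (hY : Y₀ ⊆ f '' Y₀) {b r : ℤ}
    {v₁ v₂ h₁ h₂ : Perm Z} (hv₁ : IsWreathDecomp H₁ f Y₀ b r v₁ h₁)
    (hv₂ : IsWreathDecomp H₁ f Y₀ b r v₂ h₂) (hh₂ : h₂ ∈ Hseq H₁ f r) :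
    IsWreathDecomp H₁ f Y₀ b r (v₁ * v₂) (h₁ * h₂) := by
  refine ⟨fun z hz => ?_, fun a ha => ?_⟩
  · rw [Perm.mul_apply, hv₂.1 z hz, hv₁.1 _ ((Perm.apply_mem_biUnion_image_iff hh₂).not.mpr hz)]
    rfl
  · obtain ⟨w₂, hw₂, e₂⟩ := hv₂.2 a ha
    obtain ⟨w₁, hw₁, e₁⟩ := hv₁.2 (h₂ * a) (mul_mem hh₂ ha)
    refine ⟨w₁ * w₂, mul_mem hw₁ hw₂, fun x hx => ?_⟩
    have := e₁ (w₂ x) (Perm.apply_mem_of_mem_fixingSubgroup_compl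
      (Lico_le_fixingSubgroup hpw hY b r hw₂) hx)
    simp only [Perm.mul_apply] at this ⊢
    rw [e₂ x hx, this]

lemma IsWreathDecomp.inv (hpw : IsPreWreath (f '' Y₀) H₁ Y₀) (hY : Y₀ ⊆ f '' Y₀) {b r : ℤ}
    {v h : Perm Z} (hv : IsWreathDecomp H₁ f Y₀ b r v h) (hh : h ∈ Hseq H₁ f r) :
    IsWreathDecomp H₁ f Y₀ b r v⁻¹ h⁻¹ := by
  refine ⟨fun z hz => ?_, fun a ha => ?_⟩
  · rw [Perm.inv_eq_iff_eq, hv.1 _ ((Perm.apply_mem_biUnion_image_iff (inv_mem hh)).not.mpr hz)]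
    exact (h.apply_symm_apply z).symm
  · obtain ⟨w, hw, e⟩ := hv.2 (h⁻¹ * a) (mul_mem (inv_mem hh) ha)
    refine ⟨w⁻¹, inv_mem hw, fun x hx => ?_⟩
    have := e (w⁻¹ x) (Perm.apply_mem_of_mem_fixingSubgroup_compl
      (Lico_le_fixingSubgroup hpw hY b r (inv_mem hw)) hx)
    simp only [Perm.mul_apply] at this
    rw [Perm.inv_eq_iff_eq, this]
    simp

lemma exists_isWreathDecomp (hpw : IsPreWreath (f '' Y₀) H₁ Y₀) (hY : Y₀ ⊆ f '' Y₀)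
    {b r : ℤ} {v : Perm Z} (hv : v ∈ Lico H₁ f b (r + 1)) :
    ∃ h ∈ Hseq H₁ f r, IsWreathDecomp H₁ f Y₀ b r v h := by
  induction hv using Subgroup.closure_induction with
  | mem u hu =>
    obtain ⟨j, hj, huj⟩ := mem_iUnion₂.mp hu
    rcases (Int.lt_add_one_iff.mp hj.2).lt_or_eq with hjr | rfl
    · exact ⟨1, one_mem _, isWreathDecomp_one_of_mem_Hseq hpw hY ⟨hj.1, hjr⟩ huj⟩
    · exact ⟨u, huj, isWreathDecomp_self b j u⟩
  | one => exact ⟨1, one_mem _, isWreathDecomp_self b r 1⟩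
  | mul v₁ v₂ _ _ ih₁ ih₂ =>
    obtain ⟨h₁, hh₁, hv₁⟩ := ih₁
    obtain ⟨h₂, hh₂, hv₂⟩ := ih₂
    exact ⟨h₁ * h₂, mul_mem hh₁ hh₂, hv₁.mul hpw hY hv₂ hh₂⟩
  | inv v _ ih =>
    obtain ⟨h, hh, hv⟩ := ih
    exact ⟨h⁻¹, inv_mem hh, hv.inv hpw hY hh⟩

lemma image_Yseq_sub_one_subset (hpw : IsPreWreath (f '' Y₀) H₁ Y₀) {r : ℤ} {a : Perm Z}
    (ha : a ∈ Hseq H₁ f r) : a '' Yseq Y₀ f (r - 1) ⊆ Yseq Y₀ f r :=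
  Perm.image_eq_of_mem_fixingSubgroup_compl (Hseq_le_fixingSubgroup hpw r ha) ▸
    image_mono (isPreWreath_Hseq hpw r).2.2.1

lemma IsWreathDecomp.exists_ne_one_of_one {b r : ℤ} {v : Perm Z}
    (hv : IsWreathDecomp H₁ f Y₀ b r v 1) (hv1 : v ≠ 1) :
    ∃ a ∈ Hseq H₁ f r, ∃ w ∈ Lico H₁ f b r, w ≠ 1 ∧
      ∀ x ∈ Yseq Y₀ f (r - 1), v (a x) = a (w x) := by
  obtain ⟨z, hz⟩ : ∃ z, v z ≠ z := by
    by_contra! h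
    exact hv1 (Perm.ext h)
  have hzU : z ∈ ⋃ a ∈ Hseq H₁ f r, a '' Yseq Y₀ f (r - 1) := by
    by_contra hzU
    exact hz (hv.1 z hzU)
  simp only [mem_iUnion, mem_image, exists_prop] at hzU
  obtain ⟨a, ha, x, hx, rfl⟩ := hzU
  obtain ⟨w, hw, e⟩ := hv.2 a ha
  refine ⟨a, ha, w, hw, ?_, e⟩
  rintro rfl
  exact hz (e x hx)

lemma IsWreathDecomp.exists_disjoint_of_ne_one (hpw : IsPreWreath (f '' Y₀) H₁ Y₀)
    (hY : Y₀ ⊆ f '' Y₀) {b r : ℤ} {v h : Perm Z} (hv : IsWreathDecomp H₁ f Y₀ b r v h)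
    (hh : h ∈ Hseq H₁ f r) (h1 : h ≠ 1) :
    ∃ a ∈ Hseq H₁ f r, Disjoint (v '' (a '' Yseq Y₀ f (r - 1))) (a '' Yseq Y₀ f (r - 1)) := by
  set X := Yseq Y₀ f (r - 1)
  have hp := isPreWreath_Hseq hpw r
  obtain ⟨a, ha, hmove⟩ := hp.2.2.2.2.2 h hh h1
  obtain ⟨w, hw, e⟩ := hv.2 a ha
  have himg : v '' (a '' X) = (h * a) '' X := calc
    v '' (a '' X) = (h * a) '' (w '' X) := by
      simpa only [image_image, Perm.mul_apply] using image_congr e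
    _ = (h * a) '' X := by
      rw [Perm.image_eq_of_mem_fixingSubgroup_compl (Lico_le_fixingSubgroup hpw hY b r hw)]
  refine ⟨a, ha, himg ▸ hp.disjoint_image_of_ne (mul_mem hh ha) ha ?_⟩
  rwa [Perm.coe_mul, image_comp]

lemma exists_le_surjective_Lseq_zero_of_disjoint (hpw : IsPreWreath (f '' Y₀) H₁ Y₀)
    (hY : Y₀ ⊆ f '' Y₀) {G N : Subgroup (Perm Z)} (hN : ∀ m ∈ G, ∀ n ∈ N, m * n * m⁻¹ ∈ N)
    {r : ℤ} (hG : Lseq H₁ f (r + 1) ≤ G) {a δ : Perm Z} (ha : a ∈ Hseq H₁ f r) (hδ : δ ∈ N)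
    (hdisj : Disjoint (δ '' (a '' Yseq Y₀ f (r - 1))) (a '' Yseq Y₀ f (r - 1))) :
    ∃ S : Subgroup (Perm Z), S ≤ N ∧ ∃ φ : S →* Lseq H₁ f 0, Function.Surjective φ := by
  set u := a * f ^ r
  set C := (Lseq H₁ f 0).map (MulAut.conj u).toMonoidHom
  have hCsupp : C ≤ fixingSubgroup (Perm Z) (a '' Yseq Y₀ f (r - 1))ᶜ := by
    have hu : u • (Yseq Y₀ f (0 - 1))ᶜ = (a '' Yseq Y₀ f (r - 1))ᶜ := by
      rw [smul_set_compl, ← image_smul]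
      change ((a * f ^ r) '' _)ᶜ = _
      rw [Perm.coe_mul, image_comp, zpow_image_Yseq, zero_sub, ← sub_eq_add_neg]
    rw [← SubMulAction.fixingSubgroup_map_conj_eq hu]
    exact Subgroup.map_mono (Lseq_le_fixingSubgroup hpw hY 0)
  have hCG : C ≤ G := by
    rintro _ ⟨l, hl, rfl⟩
    have hfl : f ^ r * l * (f ^ r)⁻¹ ∈ G :=
      hG (Lseq_mono (lt_add_one r).le (map_conj_zpow_Lseq_zero_le r ⟨l, hl, rfl⟩))
    have haG : a ∈ G := hG (Hseq_le_Lseq (lt_add_one r) ha)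
    convert mul_mem (mul_mem haG hfl) (inv_mem haG) using 1
    simp only [u, MulEquiv.coe_toMonoidHom, MulAut.conj_apply]
    group
  obtain ⟨S, hSN, φ, hφ⟩ :=
    Perm.exists_le_surjective_of_disjoint_image hδ hCsupp (fun c hc => hN c (hCG hc)) hdisj
  let e := (Lseq H₁ f 0).equivMapOfInjective (MulAut.conj u).toMonoidHom (MulAut.conj u).injective
  exact ⟨S, hSN, e.symm.toMonoidHom.comp φ, e.symm.surjective.comp hφ⟩

theorem exists_le_surjective_Lseq_zero_of_mem_Lico (hpw : IsPreWreath (f '' Y₀) H₁ Y₀)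
    (hY : Y₀ ⊆ f '' Y₀) {G N : Subgroup (Perm Z)} (hN : ∀ m ∈ G, ∀ n ∈ N, m * n * m⁻¹ ∈ N)
    {b r : ℤ} (hbr : b ≤ r) {v δ : Perm Z} (hv : v ∈ Lico H₁ f b r) (hv1 : v ≠ 1) (hδ : δ ∈ N)
    (hδv : EqOn δ v (Yseq Y₀ f (r - 1))) (hG : Lseq H₁ f r ≤ G) :
    ∃ S : Subgroup (Perm Z), S ≤ N ∧ ∃ φ : S →* Lseq H₁ f 0, Function.Surjective φ := by
  induction r, hbr using Int.leInduction generalizing v δ with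
  | base =>
    rw [Lico_self, Subgroup.mem_bot] at hv
    exact absurd hv hv1
  | succ r hbr ih =>
    rw [add_sub_cancel_right] at hδv
    obtain ⟨h, hh, hdec⟩ := exists_isWreathDecomp hpw hY hv
    rcases eq_or_ne h 1 with rfl | h1
    · obtain ⟨a, ha, w, hw, hw1, e⟩ := hdec.exists_ne_one_of_one hv1
      have hconj : a⁻¹ * δ * a ∈ N := by
        simpa using hN a⁻¹ (hG (Hseq_le_Lseq (lt_add_one r) (inv_mem ha))) δ hδ
      refine ih hw hw1 hconj (fun x hx => ?_) ((Lseq_mono (lt_add_one r).le).trans hG)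
      change a⁻¹ (δ (a x)) = w x
      rw [hδv (image_Yseq_sub_one_subset hpw ha (mem_image_of_mem a hx)), e x hx]
      simp
    · obtain ⟨a, ha, hdisj⟩ := hdec.exists_disjoint_of_ne_one hpw hY hh h1
      refine exists_le_surjective_Lseq_zero_of_disjoint hpw hY hN hG ha hδ ?_
      rwa [image_congr (hδv.mono (image_Yseq_sub_one_subset hpw ha))]

theorem exists_le_surjective_Lseq_zero_of_mem_Lseq (hpw : IsPreWreath (f '' Y₀) H₁ Y₀)
    (hY : Y₀ ⊆ f '' Y₀) {G N : Subgroup (Perm Z)} (hN : ∀ m ∈ G, ∀ n ∈ N, m * n * m⁻¹ ∈ N)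
    {r : ℤ} (hG : Lseq H₁ f r ≤ G) {g : Perm Z} (hg : g ∈ Lseq H₁ f r) (hg1 : g ≠ 1)
    (hgN : g ∈ N) :
    ∃ S : Subgroup (Perm Z), S ≤ N ∧ ∃ φ : S →* Lseq H₁ f 0, Function.Surjective φ :=
  let ⟨_, hbr, hgb⟩ := exists_mem_Lico_of_mem_Lseq hg
  exists_le_surjective_Lseq_zero_of_mem_Lico hpw hY hN hbr hgb hg1 hgN (fun _ _ => rfl) hG

end Setting

/-- In the inductive setting, every nontrivial normal subgroup of `M`
contains a subgroup that surjects onto `L₀`, and likewise every nontrivial normal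
subgroup of each `Lᵢ` contains a subgroup that surjects onto `L₀`. -/
theorem stmt13 {Z : Type*} (H₁ : Subgroup (Equiv.Perm Z)) (f : Equiv.Perm Z)
    (Y₀ W₀ : Set Z) (hsetting : InductiveSetting H₁ f Y₀ W₀) :
    (∀ N : Subgroup (Equiv.Perm Z), N ≤ Mgrp H₁ f →
      (∀ m ∈ Mgrp H₁ f, ∀ n ∈ N, m * n * m⁻¹ ∈ N) → N ≠ ⊥ →
      ∃ S : Subgroup (Equiv.Perm Z), S ≤ N ∧
        ∃ φ : S →* Lseq H₁ f 0, Function.Surjective φ) ∧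
    (∀ i : ℤ, ∀ N : Subgroup (Equiv.Perm Z), N ≤ Lseq H₁ f i →
      (∀ m ∈ Lseq H₁ f i, ∀ n ∈ N, m * n * m⁻¹ ∈ N) → N ≠ ⊥ →
      ∃ S : Subgroup (Equiv.Perm Z), S ≤ N ∧
        ∃ φ : S →* Lseq H₁ f 0, Function.Surjective φ) := by
  obtain ⟨hpw, hY₀, hsupp, -⟩ := hsetting
  have hY : Y₀ ⊆ f '' Y₀ := hY₀.trans hsupp
  refine ⟨fun N hNM hN hN1 => ?_, fun i N hNL hN hN1 => ?_⟩
  · obtain ⟨g, hgN, hg1⟩ := N.bot_or_exists_ne_one.resolve_left hN1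
    obtain ⟨r, hg⟩ := exists_mem_Lseq_of_mem_Mgrp (hNM hgN)
    exact exists_le_surjective_Lseq_zero_of_mem_Lseq hpw hY hN (Lseq_le_Mgrp r) hg hg1 hgN
  · obtain ⟨g, hgN, hg1⟩ := N.bot_or_exists_ne_one.resolve_left hN1
    exact exists_le_surjective_Lseq_zero_of_mem_Lseq hpw hY hN le_rfl (hNL hgN) hg1 hgN
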